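/- arXiv:1809.00322 — 2 statements merged into one kernel-verified Lean document; each statement's English description precedes it below -/
import Mathlib

section
/- Let N₁, N₂ : ℝ → ℝ be monotone nondecreasing, right-continuous functions vanishing on (−∞, 0]. If ∫₀ᵏ (k−t)² dN₁(t) = ∫₀ᵏ (k−t)² dN₂(t) for all k > 0, then N₁ = N₂. -/
/-!
By Fubini, `∫_{(0,k]} (k - t)² dN(t) = 2 ∫₀ᵏ (k - u) N(u) du`, so `D = N₁ - N₂` satisfies
`∫₀ᵏ (k - u) D(u) du = 0` for all `k > 0`. The right derivative in `k` of this integral is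
`∫₀ᵏ D`, and the right derivative of that is `D(k)`, because `D` is right-continuous.
-/

open MeasureTheory Set

section Fubini

variable {E : Type*} [NormedAddCommGroup E] [NormedSpace ℝ E] [CompleteSpace E]

theorem setIntegral_Ioc_intervalIntegral_eq (μ : Measure ℝ) [IsLocallyFiniteMeasure μ]
    {a b : ℝ} {g : ℝ → E} (hg : IntegrableOn g (Ioc a b)) :
    ∫ t in Ioc a b, (∫ u in t..b, g u) ∂μ = ∫ u in Ioc a b, μ.real (Ioc a u) • g u := by
  have : IsFiniteMeasure (μ.restrict (Ioc a b)) :=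
    isFiniteMeasure_restrict.2 measure_Ioc_lt_top.ne
  set F : ℝ → ℝ → E := fun t u => {p : ℝ × ℝ | p.1 ≤ p.2}.indicator (fun p => g p.2) (t, u)
  have hF : Integrable (Function.uncurry F)
      ((μ.restrict (Ioc a b)).prod (volume.restrict (Ioc a b))) :=
    (hg.comp_snd _).indicator (measurableSet_le measurable_fst measurable_snd)
  have inner_u : ∀ t ∈ Ioc a b, ∫ u in Ioc a b, F t u = ∫ u in t..b, g u := by
    intro t ht
    have hFt : F t = (Ici t).indicator g := by ext u; simp [F, indicator]
    have hIcc : Ioc a b ∩ Ici t = Icc t b := by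
      ext u; simp only [mem_inter_iff, mem_Ioc, mem_Ici, mem_Icc]; grind [ht.1]
    rw [hFt, setIntegral_indicator measurableSet_Ici, hIcc, integral_Icc_eq_integral_Ioc,
      intervalIntegral.integral_of_le ht.2]
  have inner_t : ∀ u ∈ Ioc a b, ∫ t in Ioc a b, F t u ∂μ = μ.real (Ioc a u) • g u := by
    intro u hu
    have hFu : (F · u) = (Iic u).indicator (fun _ => g u) := by ext t; simp [F, indicator]
    rw [hFu, setIntegral_indicator measurableSet_Iic, Ioc_inter_Iic, min_eq_right hu.2,
      setIntegral_const]
  calc ∫ t in Ioc a b, (∫ u in t..b, g u) ∂μ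
      = ∫ t in Ioc a b, (∫ u in Ioc a b, F t u) ∂μ :=
        setIntegral_congr_fun measurableSet_Ioc fun t ht => (inner_u t ht).symm
    _ = ∫ u in Ioc a b, ∫ t in Ioc a b, F t u ∂μ := integral_integral_swap hF
    _ = ∫ u in Ioc a b, μ.real (Ioc a u) • g u :=
        setIntegral_congr_fun measurableSet_Ioc inner_t

end Fubini

theorem StieltjesFunction.setIntegral_Ioc_sub_sq (N : StieltjesFunction ℝ) {a k : ℝ}
    (hak : a ≤ k) :
    ∫ t in Ioc a k, (k - t) ^ 2 ∂N.measure = 2 * ∫ u in a..k, (k - u) * (N u - N a) := by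
  have hsq : ∀ t, (k - t) ^ 2 = ∫ u in t..k, 2 * (k - u) := fun t => by
    have hsub := intervalIntegral.integral_comp_sub_left (fun x => 2 * x) k (a := t) (b := k)
    simp only [sub_self] at hsub
    rw [hsub, intervalIntegral.integral_const_mul, integral_id]
    ring
  calc ∫ t in Ioc a k, (k - t) ^ 2 ∂N.measure
      = ∫ t in Ioc a k, (∫ u in t..k, 2 * (k - u)) ∂N.measure := by simp_rw [hsq]
    _ = ∫ u in Ioc a k, N.measure.real (Ioc a u) • (2 * (k - u)) :=
        setIntegral_Ioc_intervalIntegral_eq _ (by fun_prop : Continuous _).integrableOn_Ioc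
    _ = ∫ u in Ioc a k, 2 * ((k - u) * (N u - N a)) := by
        refine setIntegral_congr_fun measurableSet_Ioc fun u hu => ?_
        rw [measureReal_def, N.measure_Ioc, ENNReal.toReal_ofReal (sub_nonneg.2 (N.mono hu.1.le)),
          smul_eq_mul]
        ring
    _ = 2 * ∫ u in a..k, (k - u) * (N u - N a) := by
        rw [integral_const_mul, intervalIntegral.integral_of_le hak]

theorem eq_zero_of_hasDerivWithinAt_Ici {φ : ℝ → ℝ} {φ' t : ℝ}
    (hφ : HasDerivWithinAt φ φ' (Ici t) t) (hzero : ∀ s, t ≤ s → φ s = 0) : φ' = 0 :=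
  (uniqueDiffWithinAt_Ici t).eq_deriv _ hφ
    ((hasDerivWithinAt_const t _ 0).congr (fun s hs => hzero s hs) (hzero t le_rfl))

theorem hasDerivWithinAt_Ici_integral {f : ℝ → ℝ} (hf : LocallyIntegrable f) {t : ℝ}
    (hft : ContinuousWithinAt f (Ici t) t) (a : ℝ) :
    HasDerivWithinAt (fun s => ∫ u in a..s, f u) (f t) (Ici t) t :=
  intervalIntegral.integral_hasDerivWithinAt_right
    (hf.integrableOn_isCompact isCompact_uIcc).intervalIntegrable
    hf.aestronglyMeasurable.stronglyMeasurableAtFilter (hft.mono Ioi_subset_Ici_self)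

theorem hasDerivWithinAt_Ici_integral_sub_mul {f : ℝ → ℝ} (hf : LocallyIntegrable f) {t : ℝ}
    (hft : ContinuousWithinAt f (Ici t) t) (a : ℝ) :
    HasDerivWithinAt (fun k => ∫ u in a..k, (k - u) * f u) (∫ u in a..t, f u) (Ici t) t := by
  have hint : ∀ k, IntervalIntegrable f volume a k := fun k =>
    (hf.integrableOn_isCompact isCompact_uIcc).intervalIntegrable
  have hmul : ∀ k, IntervalIntegrable (fun u => u * f u) volume a k := fun k =>
    (hint k).continuousOn_mul continuousOn_id
  have hsplit : (fun k => ∫ u in a..k, (k - u) * f u)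
      = fun k => k * (∫ u in a..k, f u) - ∫ u in a..k, u * f u := by
    funext k
    simp only [sub_mul]
    rw [intervalIntegral.integral_sub ((hint k).const_mul k) (hmul k),
      intervalIntegral.integral_const_mul]
  have hd := ((hasDerivWithinAt_id (s := Ici t) (x := t)).mul
    (hasDerivWithinAt_Ici_integral hf hft a)).sub
    (hasDerivWithinAt_Ici_integral (f := fun u => u * f u) (hf.continuous_mul continuous_id)
      (continuousWithinAt_id.mul hft) a)
  rw [hsplit]
  exact hd.congr_deriv (by rw [id]; ring)

theorem eq_zero_of_integral_sub_mul_eq_zero {f : ℝ → ℝ} (hf : LocallyIntegrable f)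
    (hf_right : ∀ t, ContinuousWithinAt f (Ici t) t) {a : ℝ}
    (h : ∀ k, a < k → ∫ u in a..k, (k - u) * f u = 0) {t : ℝ} (ht : a ≤ t) : f t = 0 := by
  have hF : ∀ k, a ≤ k → ∫ u in a..k, (k - u) * f u = 0 := fun k hk =>
    hk.eq_or_lt.elim (fun hak => by rw [hak, intervalIntegral.integral_same]) (h k)
  have hH : ∀ k, a ≤ k → ∫ u in a..k, f u = 0 := fun k hk =>
    eq_zero_of_hasDerivWithinAt_Ici (hasDerivWithinAt_Ici_integral_sub_mul hf (hf_right k) a)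
      fun s hs => hF s (hk.trans hs)
  exact eq_zero_of_hasDerivWithinAt_Ici (hasDerivWithinAt_Ici_integral hf (hf_right t) a)
    fun s hs => hH s (ht.trans hs)

theorem riesz_mean_determines_counting_function (N₁ N₂ : StieltjesFunction ℝ)
    (h₁ : ∀ t : ℝ, t ≤ 0 → N₁ t = 0) (h₂ : ∀ t : ℝ, t ≤ 0 → N₂ t = 0)
    (h : ∀ k : ℝ, 0 < k →
      ∫ t in Set.Ioc (0 : ℝ) k, (k - t) ^ 2 ∂N₁.measure
        = ∫ t in Set.Ioc (0 : ℝ) k, (k - t) ^ 2 ∂N₂.measure) :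
    ∀ t : ℝ, N₁ t = N₂ t := by
  intro t
  rcases lt_or_ge t 0 with ht | ht
  · rw [h₁ t ht.le, h₂ t ht.le]
  have hint : ∀ (N : StieltjesFunction ℝ) k,
      IntervalIntegrable (fun u => (k - u) * N u) volume 0 k :=
    fun N k => N.mono.intervalIntegrable.continuousOn_mul (by fun_prop)
  refine sub_eq_zero.1 <| eq_zero_of_integral_sub_mul_eq_zero
    (N₁.mono.locallyIntegrable.sub N₂.mono.locallyIntegrable)
    (fun s => (N₁.right_continuous s).sub (N₂.right_continuous s)) (fun k hk => ?_) ht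
  have hR := h k hk
  rw [N₁.setIntegral_Ioc_sub_sq hk.le, N₂.setIntegral_Ioc_sub_sq hk.le, h₁ 0 le_rfl,
    h₂ 0 le_rfl] at hR
  simp only [sub_zero, Pi.sub_apply, mul_sub] at hR ⊢
  rw [intervalIntegral.integral_sub (hint N₁ k) (hint N₂ k)]
  linarith
end

section
/- Let N : ℝ → ℝ be nondecreasing with N(t) = 0 for t ≤ 0, and suppose ∫₀ᵏ (k−t)² dN(t) = C·k^(d+2) + O(k^(d+1)) as k → ∞ for some constant C > 0 and integer d ≥ 2. Then N(k) ≤ C'·k^d for some constant C' and all sufficiently large k. -/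
open MeasureTheory Filter Asymptotics

/-!
Since `(2k - t)² ≥ k²` for `t ≤ k`, the Riesz mean at `2k` dominates `k² N(k)`; the hypothesis
bounds that Riesz mean by `O((2k)^(d+2))`, and dividing by `k²` gives `N(k) = O(k^d)`.
-/

theorem StieltjesFunction.measureReal_Ioc (f : StieltjesFunction ℝ) {a b : ℝ} (hab : a ≤ b) :
    f.measure.real (Set.Ioc a b) = f b - f a := by
  rw [measureReal_def, f.measure_Ioc, ENNReal.toReal_ofReal (sub_nonneg.2 (f.mono hab))]

theorem sq_sub_mul_measureReal_Ioc_le_setIntegral {μ : Measure ℝ} [IsLocallyFiniteMeasure μ]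
    {a x k : ℝ} (hxk : x ≤ k) :
    (k - x) ^ 2 * μ.real (Set.Ioc a x) ≤ ∫ t in Set.Ioc a k, (k - t) ^ 2 ∂μ := by
  have hint : ∀ b, IntegrableOn (fun t => (k - t) ^ 2) (Set.Ioc a b) μ := fun b =>
    (continuous_const.sub continuous_id).pow 2 |>.integrableOn_Ioc
  calc (k - x) ^ 2 * μ.real (Set.Ioc a x)
      ≤ ∫ t in Set.Ioc a x, (k - t) ^ 2 ∂μ :=
        setIntegral_ge_of_const_le_real measurableSet_Ioc measure_Ioc_lt_top.ne
          (fun t ht => pow_le_pow_left₀ (by linarith) (by linarith [ht.2]) 2) (hint x)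
    _ ≤ ∫ t in Set.Ioc a k, (k - t) ^ 2 ∂μ :=
        setIntegral_mono_set (hint k) (ae_of_all _ fun t => sq_nonneg _)
          (Set.Ioc_subset_Ioc_right hxk).eventuallyLE

theorem Asymptotics.IsBigO.of_sub_const_mul {α 𝕜 : Type*} [NormedField 𝕜] {l : Filter α}
    {f g g' : α → 𝕜} (c : 𝕜) (h : (fun x => f x - c * g x) =O[l] g') (hg' : g' =O[l] g) :
    f =O[l] g := by
  simpa using (h.trans hg').add ((isBigO_refl g l).const_mul_left c)

theorem tauberian_upper_bound_general (N : StieltjesFunction ℝ)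
    (hN0 : ∀ t : ℝ, t ≤ 0 → N t = 0) (C : ℝ) (d : ℕ)
    (h : (fun k : ℝ => (∫ t in Set.Ioc (0 : ℝ) k, (k - t) ^ 2 ∂N.measure)
        - C * k ^ (d + 2)) =O[atTop] fun k : ℝ => k ^ (d + 1)) :
    ∃ C' : ℝ, ∀ᶠ k in atTop, N k ≤ C' * k ^ d := by
  have hRiesz := h.of_sub_const_mul C (isLittleO_pow_pow_atTop_of_lt (Nat.lt_succ_self _)).isBigO
  obtain ⟨c, hc⟩ := (hRiesz.comp_tendsto (tendsto_id.const_mul_atTop two_pos)).bound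
  refine ⟨c * 2 ^ (d + 2), ?_⟩
  filter_upwards [hc, eventually_gt_atTop 0] with k hk hk0
  have hdom := sq_sub_mul_measureReal_Ioc_le_setIntegral (μ := N.measure) (a := 0)
    (show k ≤ 2 * k by linarith)
  rw [N.measureReal_Ioc hk0.le, hN0 0 le_rfl, sub_zero] at hdom
  simp only [Function.comp_apply, id, Real.norm_eq_abs, abs_pow] at hk
  have hbound : k ^ 2 * N k ≤ k ^ 2 * (c * 2 ^ (d + 2) * k ^ d) :=
    calc k ^ 2 * N k = (2 * k - k) ^ 2 * N k := by ring
      _ ≤ _ := hdom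
      _ ≤ c * |2 * k| ^ (d + 2) := (le_abs_self _).trans hk
      _ = k ^ 2 * (c * 2 ^ (d + 2) * k ^ d) := by rw [abs_of_pos (by positivity)]; ring
  exact le_of_mul_le_mul_left hbound (by positivity)

theorem tauberian_upper_bound (N : StieltjesFunction ℝ)
    (hN0 : ∀ t : ℝ, t ≤ 0 → N t = 0) (C : ℝ) (hC : 0 < C) (d : ℕ) (hd : 2 ≤ d)
    (h : (fun k : ℝ => (∫ t in Set.Ioc (0 : ℝ) k, (k - t) ^ 2 ∂N.measure)
        - C * k ^ (d + 2)) =O[atTop] fun k : ℝ => k ^ (d + 1)) :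
    ∃ C' : ℝ, ∀ᶠ k in atTop, N k ≤ C' * k ^ d :=
  tauberian_upper_bound_general N hN0 C d h
end
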